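/- If G and H are finite groups, then a subgroup of G × H of the form A × B (with A ≤ G, B ≤ H) attains the maximum Chermak–Delgado measure of G × H if and only if A attains the maximum in G and B attains the maximum in H; moreover every subgroup attaining the maximum in G × H is of this product form. -/

import Mathlib

/-- The Chermak–Delgado measure of a subgroup. -/
noncomputable def cdMeasure {G : Type*} [Group G] (H : Subgroup G) : ℕ :=
  Nat.card H * Nat.card (Subgroup.centralizer (H : Set G))

/-!
An element `(g, h)` centralizes `M ≤ G × H` iff `g` centralizes the projection of `M` to `G` and
`h` the projection to `H`. So `M` and the product `M₁ × M₂` of its projections have the same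
centralizer, and `M ≤ M₁ × M₂` gives `m(M) ≤ m(M₁ × M₂) = m(M₁) m(M₂)`, with equality only if
`M = M₁ × M₂`. Both claims follow, since `m(A × B) = m(A) m(B)` and all measures are positive.
-/

namespace Subgroup

variable {G H : Type*} [Group G] [Group H]

theorem centralizer_eq_prod_centralizer_map (M : Subgroup (G × H)) :
    centralizer (M : Set (G × H)) =
      (centralizer (M.map (MonoidHom.fst G H) : Set G)).prod
        (centralizer (M.map (MonoidHom.snd G H) : Set H)) := by
  ext ⟨g, h⟩
  simp only [mem_prod, mem_centralizer_iff]
  constructor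
  · intro hc
    exact ⟨by rintro _ ⟨m, hm, rfl⟩; exact congrArg Prod.fst (hc m hm),
      by rintro _ ⟨m, hm, rfl⟩; exact congrArg Prod.snd (hc m hm)⟩
  · rintro ⟨hg, hh⟩ m hm
    exact Prod.ext (hg _ ⟨m, hm, rfl⟩) (hh _ ⟨m, hm, rfl⟩)

theorem map_fst_prod (A : Subgroup G) (B : Subgroup H) : (A.prod B).map (MonoidHom.fst G H) = A :=
  le_antisymm (map_le_iff_le_comap.2 fun _ hm => hm.1)
    fun a ha => ⟨(a, 1), ⟨ha, B.one_mem⟩, rfl⟩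

theorem map_snd_prod (A : Subgroup G) (B : Subgroup H) : (A.prod B).map (MonoidHom.snd G H) = B :=
  le_antisymm (map_le_iff_le_comap.2 fun _ hm => hm.2)
    fun b hb => ⟨(1, b), ⟨A.one_mem, hb⟩, rfl⟩

theorem centralizer_prod (A : Subgroup G) (B : Subgroup H) :
    centralizer (A.prod B : Set (G × H)) = (centralizer (A : Set G)).prod (centralizer (B : Set H)) := by
  rw [centralizer_eq_prod_centralizer_map, map_fst_prod, map_snd_prod]

theorem centralizer_prod_map_fst_map_snd (M : Subgroup (G × H)) :
    centralizer ((M.map (MonoidHom.fst G H)).prod (M.map (MonoidHom.snd G H)) : Set (G × H)) =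
      centralizer (M : Set (G × H)) := by
  rw [centralizer_prod, centralizer_eq_prod_centralizer_map]

theorem le_prod_map_fst_map_snd (M : Subgroup (G × H)) :
    M ≤ (M.map (MonoidHom.fst G H)).prod (M.map (MonoidHom.snd G H)) :=
  le_prod_iff.2 ⟨le_rfl, le_rfl⟩

theorem card_prod (A : Subgroup G) (B : Subgroup H) :
    Nat.card (A.prod B) = Nat.card A * Nat.card B := by
  rw [Nat.card_congr (A.prodEquiv B).toEquiv, Nat.card_prod]

end Subgroup

open Subgroup

section

variable {G H : Type*} [Group G] [Group H]

theorem cdMeasure_prod (A : Subgroup G) (B : Subgroup H) :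
    cdMeasure (A.prod B) = cdMeasure A * cdMeasure B := by
  rw [cdMeasure, centralizer_prod, card_prod, card_prod, cdMeasure, cdMeasure, mul_mul_mul_comm]

theorem cdMeasure_pos [Finite G] (A : Subgroup G) : 0 < cdMeasure A :=
  Nat.mul_pos Nat.card_pos Nat.card_pos

variable [Finite G] [Finite H]

theorem cdMeasure_le_cdMeasure_prod_map (M : Subgroup (G × H)) :
    cdMeasure M ≤ cdMeasure ((M.map (MonoidHom.fst G H)).prod (M.map (MonoidHom.snd G H))) := by
  rw [cdMeasure, cdMeasure, centralizer_prod_map_fst_map_snd]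
  exact Nat.mul_le_mul_right _ (card_le_of_le (le_prod_map_fst_map_snd M))

theorem eq_prod_map_of_cdMeasure_prod_map_le {M : Subgroup (G × H)}
    (hM : cdMeasure ((M.map (MonoidHom.fst G H)).prod (M.map (MonoidHom.snd G H))) ≤ cdMeasure M) :
    M = (M.map (MonoidHom.fst G H)).prod (M.map (MonoidHom.snd G H)) := by
  rw [cdMeasure, cdMeasure, centralizer_prod_map_fst_map_snd] at hM
  exact eq_of_le_of_card_ge (le_prod_map_fst_map_snd M) (Nat.le_of_mul_le_mul_right hM Nat.card_pos)

end

theorem cd_of_prod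
    (G H : Type*) [Group G] [Group H] [Finite G] [Finite H] :
    (∀ (A : Subgroup G) (B : Subgroup H),
      ((∀ M : Subgroup (G × H), cdMeasure M ≤ cdMeasure (A.prod B)) ↔
        ((∀ K : Subgroup G, cdMeasure K ≤ cdMeasure A) ∧
          (∀ K : Subgroup H, cdMeasure K ≤ cdMeasure B)))) ∧
    (∀ M : Subgroup (G × H), (∀ N : Subgroup (G × H), cdMeasure N ≤ cdMeasure M) →
      ∃ (A : Subgroup G) (B : Subgroup H), M = A.prod B) := by
  refine ⟨fun A B => ⟨fun hmax => ⟨fun K => ?_, fun K => ?_⟩, fun ⟨hA, hB⟩ M => ?_⟩,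
    fun M hmax => ⟨_, _, eq_prod_map_of_cdMeasure_prod_map_le (hmax _)⟩⟩
  · have hK := hmax (K.prod B)
    rw [cdMeasure_prod, cdMeasure_prod] at hK
    exact Nat.le_of_mul_le_mul_right hK (cdMeasure_pos B)
  · have hK := hmax (A.prod K)
    rw [cdMeasure_prod, cdMeasure_prod] at hK
    exact Nat.le_of_mul_le_mul_left hK (cdMeasure_pos A)
  · calc cdMeasure M
        ≤ cdMeasure ((M.map (MonoidHom.fst G H)).prod (M.map (MonoidHom.snd G H))) :=
          cdMeasure_le_cdMeasure_prod_map M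
      _ = cdMeasure (M.map (MonoidHom.fst G H)) * cdMeasure (M.map (MonoidHom.snd G H)) :=
          cdMeasure_prod _ _
      _ ≤ cdMeasure A * cdMeasure B := Nat.mul_le_mul (hA _) (hB _)
      _ = cdMeasure (A.prod B) := (cdMeasure_prod A B).symm
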